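/- arXiv:0707.0482 — 2 statements merged into one kernel-verified Lean document; each statement's English description precedes it below -/
import Mathlib

section
/- For the explicit Dirac matrices, the Fierz-type completeness identity holds: Σ_{m,n} γ_m g^{mn} γ_n viewed entrywise, i.e. for all indices a,b,c,d, Σ_{m,n=0}^{3} (γ_m)^d_b g^{mn} (γ_n)^a_c = δ^d_c δ^a_b − H^d_c H^a_b + d^{da} d_{bc} − Σ_{r,s} H^d_r d^{ra} d_{bs} H^s_c, where d^{ab} denotes the entries of the inverse of the matrix d. -/
open Matrix

/-- The chirality matrix `H = diag(1, 1, -1, -1)`. -/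
def Hmat : Matrix (Fin 4) (Fin 4) ℂ :=
  !![1, 0, 0, 0; 0, 1, 0, 0; 0, 0, -1, 0; 0, 0, 0, -1]

/-- The skew-symmetric spinor metric `d`. -/
def dmat : Matrix (Fin 4) (Fin 4) ℂ :=
  !![0, 1, 0, 0; -1, 0, 0, 0; 0, 0, 0, -1; 0, 0, 1, 0]

/-- The chiral-representation Dirac gamma matrices `γ₀, γ₁, γ₂, γ₃`. -/
def gam : Fin 4 → Matrix (Fin 4) (Fin 4) ℂ :=
  ![!![0, 0, 1, 0; 0, 0, 0, 1; 1, 0, 0, 0; 0, 1, 0, 0],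
    !![0, 0, 0, 1; 0, 0, 1, 0; 0, -1, 0, 0; -1, 0, 0, 0],
    !![0, 0, 0, -Complex.I; 0, 0, Complex.I, 0; 0, Complex.I, 0, 0; -Complex.I, 0, 0, 0],
    !![0, 0, 1, 0; 0, 0, 0, -1; -1, 0, 0, 0; 0, 1, 0, 0]]

/-- The Minkowski metric components `g = diag(1, -1, -1, -1)` (equal to its own inverse). -/
def gmink : Fin 4 → Fin 4 → ℂ :=
  fun m n => if m = n then (if m = 0 then 1 else -1) else 0

open GaussianInt

/-!
Every entry of `γₘ`, `g`, `H` and `d` lies in `ℤ[i] = ℤ + ℤ·i`, and so does `d⁻¹ = -d`. Over `ℤ[i]`,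
which has decidable equality, the identity is a finite computation that the kernel checks by
evaluation for all `4⁴` index tuples; it is then transported to `ℂ` along the ring embedding
`ℤ[i] → ℂ`.
-/

lemma dmat_inv : dmat⁻¹ = -dmat := by
  refine inv_eq_right_inv ?_
  ext i j
  fin_cases i <;> fin_cases j <;> simp [dmat, mul_apply, Fin.sum_univ_four]

def HmatZi : Matrix (Fin 4) (Fin 4) GaussianInt :=
  !![1, 0, 0, 0; 0, 1, 0, 0; 0, 0, -1, 0; 0, 0, 0, -1]

def dmatZi : Matrix (Fin 4) (Fin 4) GaussianInt :=
  !![0, 1, 0, 0; -1, 0, 0, 0; 0, 0, 0, -1; 0, 0, 1, 0]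

def gamZi : Fin 4 → Matrix (Fin 4) (Fin 4) GaussianInt :=
  ![!![0, 0, 1, 0; 0, 0, 0, 1; 1, 0, 0, 0; 0, 1, 0, 0],
    !![0, 0, 0, 1; 0, 0, 1, 0; 0, -1, 0, 0; -1, 0, 0, 0],
    !![0, 0, 0, -Zsqrtd.sqrtd; 0, 0, Zsqrtd.sqrtd, 0; 0, Zsqrtd.sqrtd, 0, 0; -Zsqrtd.sqrtd, 0, 0, 0],
    !![0, 0, 1, 0; 0, 0, 0, -1; -1, 0, 0, 0; 0, 1, 0, 0]]

def gminkZi : Fin 4 → Fin 4 → GaussianInt :=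
  fun m n => if m = n then (if m = 0 then 1 else -1) else 0

lemma toComplex_HmatZi (i j : Fin 4) : (HmatZi i j : ℂ) = Hmat i j := by
  fin_cases i <;> fin_cases j <;> simp [HmatZi, Hmat]

lemma toComplex_dmatZi (i j : Fin 4) : (dmatZi i j : ℂ) = dmat i j := by
  fin_cases i <;> fin_cases j <;> simp [dmatZi, dmat]

lemma toComplex_gamZi (m i j : Fin 4) : (gamZi m i j : ℂ) = gam m i j := by
  fin_cases m <;> fin_cases i <;> fin_cases j <;> simp [gamZi, gam, Zsqrtd.sqrtd, toComplex_def']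

lemma toComplex_gminkZi (m n : Fin 4) : (gminkZi m n : ℂ) = gmink m n := by
  unfold gminkZi gmink
  split_ifs <;> simp

theorem gamma_completeness_gaussianInt (a b c d : Fin 4) :
    ∑ m : Fin 4, ∑ n : Fin 4, gamZi m d b * gminkZi m n * gamZi n a c =
      (1 : Matrix (Fin 4) (Fin 4) GaussianInt) d c * (1 : Matrix (Fin 4) (Fin 4) GaussianInt) a b
        - HmatZi d c * HmatZi a b + (-dmatZi) d a * dmatZi b c
        - ∑ r : Fin 4, ∑ s : Fin 4, HmatZi d r * (-dmatZi) r a * dmatZi b s * HmatZi s c := by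
  revert a b c d
  decide

/-- Fierz-type completeness identity for the explicit Dirac matrices:
`Σ_{m,n} (γ_m)^d_b g^{mn} (γ_n)^a_c
  = δ^d_c δ^a_b − H^d_c H^a_b + d^{da} d_{bc} − Σ_{r,s} H^d_r d^{ra} d_{bs} H^s_c`,
where `d^{ab}` are the entries of `d⁻¹`. -/
theorem gamma_completeness (a b c d : Fin 4) :
    ∑ m : Fin 4, ∑ n : Fin 4, gam m d b * gmink m n * gam n a c =
      (1 : Matrix (Fin 4) (Fin 4) ℂ) d c * (1 : Matrix (Fin 4) (Fin 4) ℂ) a b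
        - Hmat d c * Hmat a b + dmat⁻¹ d a * dmat b c
        - ∑ r : Fin 4, ∑ s : Fin 4, Hmat d r * dmat⁻¹ r a * dmat b s * Hmat s c := by
  have h := congrArg ((↑) : GaussianInt → ℂ) (gamma_completeness_gaussianInt a b c d)
  rw [dmat_inv]
  simpa only [map_sum, map_sub, map_add, map_mul, Matrix.neg_apply, map_neg, one_apply, apply_ite,
    map_one, map_zero, toComplex_gamZi, toComplex_gminkZi, toComplex_HmatZi, toComplex_dmatZi]
    using h
end

section
/- Under the same hypotheses (A defined by the quarter formula from metric-compatible Γ, explicit constant gammas and g), the spinor curvature satisfies the relation R(spinor)^p_{qij} = (1/4) Σ_{m,n,r,α} R^r_{mij} γ^α_{qn} g^{mn} γ^p_{αr}, where R^r_{mij} = ∂_i Γ^r_{jm} − ∂_j Γ^r_{im} + Σ_h (Γ^r_{ih} Γ^h_{jm} − Γ^r_{jh} Γ^h_{im}) and R(spinor)^p_{qij} = ∂_i A^p_{jq} − ∂_j A^p_{iq} + Σ_h (A^p_{ih} A^h_{jq} − A^p_{jh} A^h_{iq}). -/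
/-!
The quarter formula sends the connection matrix `Γ_i` to `¼ Σ (Γ_i g)_{rm} γ_r γ_m`.
It is linear in `Γ_i`, so partial derivatives pass through it. On matrices `B` with `B g`
antisymmetric (which is what metricity says of `Γ_i`) it is a Lie algebra homomorphism:
from the Clifford relations `γ_a γ_b + γ_b γ_a = 2 g_{ab}`, the bivector `Σ L_{cd} γ_c γ_d`
of an antisymmetric `L` acts on each `γ_a` by commutator as the matrix `4 L g`, hence by the
Leibniz rule on bivectors as well, and commutators of bivectors are bivectors of commutators. Since the Riemann tensor is
`∂_i Γ_j - ∂_j Γ_i + [Γ_i, Γ_j]`, its image is the spinor curvature.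
-/

open Matrix

/-- Hannibal's spinor connection components built from connection coefficients `Γ`
(`Γ i m r` is `Γ^r_{im}`): `A^a_{ib} = (1/4) Σ_{m,n,r,α} Γ^r_{im} γ^α_{bn} g^{mn} γ^a_{αr}`. -/
noncomputable def Acon (Γ : Fin 4 → Fin 4 → Fin 4 → ℝ) (a i b : Fin 4) : ℂ :=
  (4 : ℂ)⁻¹ * ∑ m : Fin 4, ∑ n : Fin 4, ∑ r : Fin 4, ∑ α : Fin 4,
    (Γ i m r : ℂ) * gam n α b * gmink m n * gam r a α

/-- Partial derivative in the `i`-th coordinate direction of a real-valued function on `ℝ⁴`. -/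
noncomputable def pdR (i : Fin 4) (f : (Fin 4 → ℝ) → ℝ) (x : Fin 4 → ℝ) : ℝ :=
  fderiv ℝ f x (Pi.single i 1)

/-- Partial derivative in the `i`-th coordinate direction of a complex-valued function on `ℝ⁴`. -/
noncomputable def pdC (i : Fin 4) (f : (Fin 4 → ℝ) → ℂ) (x : Fin 4 → ℝ) : ℂ :=
  fderiv ℝ f x (Pi.single i 1)

/-- The Riemann curvature `R^r_{mij} = ∂_i Γ^r_{jm} - ∂_j Γ^r_{im}
+ Σ_h (Γ^r_{ih} Γ^h_{jm} - Γ^r_{jh} Γ^h_{im})` of connection coefficients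
`Γ` (`Γ x i m r` is `Γ^r_{im}(x)`), in a holonomic frame. -/
noncomputable def Riem (Γ : (Fin 4 → ℝ) → Fin 4 → Fin 4 → Fin 4 → ℝ)
    (x : Fin 4 → ℝ) (r m i j : Fin 4) : ℝ :=
  pdR i (fun y => Γ y j m r) x - pdR j (fun y => Γ y i m r) x
    + ∑ h : Fin 4, (Γ x i h r * Γ x j m h - Γ x j h r * Γ x i m h)

namespace Clifford

variable {𝕜 A ι : Type*} [Field 𝕜] [Ring A] [Algebra 𝕜 A]

theorem commutator_mul_mul_gamma {γ : ι → A} {η : Matrix ι ι 𝕜}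
    (hγ : ∀ a b, γ a * γ b + γ b * γ a = (2 * η a b) • (1 : A)) (a c d : ι) :
    γ c * γ d * γ a - γ a * (γ c * γ d) = (2 * η d a) • γ c - (2 * η c a) • γ d := by
  calc _ = γ c * (γ d * γ a + γ a * γ d) - (γ c * γ a + γ a * γ c) * γ d := by
        noncomm_ring
    _ = _ := by rw [hγ, hγ, mul_smul_comm, smul_mul_assoc, mul_one, one_mul]

variable [Fintype ι]

def bivector (γ : ι → A) : Matrix ι ι 𝕜 →ₗ[𝕜] A where
  toFun K := ∑ a, ∑ b, K a b • (γ a * γ b)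
  map_add' K L := by simp only [Matrix.add_apply, add_smul, Finset.sum_add_distrib]
  map_smul' c K := by
    simp only [Matrix.smul_apply, smul_eq_mul, mul_smul, Finset.smul_sum, RingHom.id_apply]

theorem bivector_apply (γ : ι → A) (K : Matrix ι ι 𝕜) :
    bivector γ K = ∑ a, ∑ b, K a b • (γ a * γ b) := rfl

def spinorMap (γ : ι → A) (η : Matrix ι ι 𝕜) : Matrix ι ι 𝕜 →ₗ[𝕜] A :=
  (4 : 𝕜)⁻¹ • bivector γ ∘ₗ LinearMap.mulRight 𝕜 η

theorem spinorMap_apply (γ : ι → A) (η B : Matrix ι ι 𝕜) :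
    spinorMap γ η B = (4 : 𝕜)⁻¹ • bivector γ (B * η) := rfl

variable {γ : ι → A} {η : Matrix ι ι 𝕜}

theorem bivector_mul (M K : Matrix ι ι 𝕜) :
    bivector γ (M * K) = ∑ a, ∑ b, K a b • ((∑ c, M c a • γ c) * γ b) := by
  simp only [bivector_apply, mul_apply, Finset.sum_mul, Finset.sum_smul, Finset.smul_sum,
    smul_mul_assoc, smul_smul]
  conv_lhs => enter [2, x]; rw [Finset.sum_comm]
  rw [Finset.sum_comm]
  conv_lhs => enter [2, i]; rw [Finset.sum_comm]
  simp only [mul_comm (M _ _)]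

theorem bivector_mul_transpose (M K : Matrix ι ι 𝕜) :
    bivector γ (K * Mᵀ) = ∑ a, ∑ b, K a b • (γ a * ∑ c, M c b • γ c) := by
  simp only [bivector_apply, mul_apply, transpose_apply, Finset.mul_sum, Finset.sum_smul,
    Finset.smul_sum, mul_smul_comm, smul_smul]
  conv_rhs => enter [2, a]; rw [Finset.sum_comm]

theorem commutator_bivector_gamma
    (hγ : ∀ a b, γ a * γ b + γ b * γ a = (2 * η a b) • (1 : A))
    {L : Matrix ι ι 𝕜} (hL : Lᵀ = -L) (a : ι) :
    bivector γ L * γ a - γ a * bivector γ L = (4 : 𝕜) • ∑ c, (L * η) c a • γ c := by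
  have swap : ∑ c, ∑ d, (L c d * (2 * η c a)) • γ d
      = -∑ c, ∑ d, (L c d * (2 * η d a)) • γ c := by
    rw [Finset.sum_comm, ← Finset.sum_neg_distrib]
    refine Finset.sum_congr rfl fun c _ => ?_
    rw [← Finset.sum_neg_distrib]
    refine Finset.sum_congr rfl fun d _ => ?_
    rw [show L d c = -L c d by simpa using congrFun (congrFun hL c) d, neg_mul, neg_smul]
  calc bivector γ L * γ a - γ a * bivector γ L
      = ∑ c, ∑ d, L c d • (γ c * γ d * γ a - γ a * (γ c * γ d)) := by
        simp only [bivector_apply, Finset.sum_mul, Finset.mul_sum, smul_mul_assoc,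
          mul_smul_comm, smul_sub, Finset.sum_sub_distrib]
    _ = ∑ c, ∑ d, (L c d * (2 * η d a)) • γ c
          - ∑ c, ∑ d, (L c d * (2 * η c a)) • γ d := by
        simp only [commutator_mul_mul_gamma hγ, smul_sub, smul_smul, Finset.sum_sub_distrib]
    _ = (4 : 𝕜) • ∑ c, (L * η) c a • γ c := by
        rw [swap, sub_neg_eq_add]
        simp only [← Finset.sum_add_distrib, ← add_smul, mul_apply, Finset.sum_smul,
          Finset.smul_sum, smul_smul]
        refine Finset.sum_congr rfl fun c _ => Finset.sum_congr rfl fun d _ => ?_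
        ring_nf

theorem commutator_bivector_bivector
    (hγ : ∀ a b, γ a * γ b + γ b * γ a = (2 * η a b) • (1 : A)) (hη : ηᵀ = η)
    {L : Matrix ι ι 𝕜} (hL : Lᵀ = -L) (K : Matrix ι ι 𝕜) :
    bivector γ L * bivector γ K - bivector γ K * bivector γ L
      = (4 : 𝕜) • bivector γ (L * η * K - K * η * L) := by
  set X := bivector γ L with hX
  have leibniz : ∀ a b, X * (γ a * γ b) - γ a * γ b * X
      = (X * γ a - γ a * X) * γ b + γ a * (X * γ b - γ b * X) := fun a b => by noncomm_ring
  have hKL : bivector γ (K * (L * η)ᵀ) = -bivector γ (K * η * L) := by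
    rw [transpose_mul, hη, hL, mul_neg, mul_neg, map_neg, mul_assoc]
  calc X * bivector γ K - bivector γ K * X
      = ∑ a, ∑ b, K a b • ((X * γ a - γ a * X) * γ b + γ a * (X * γ b - γ b * X)) := by
        simp only [bivector_apply γ K, ← leibniz, Finset.mul_sum, Finset.sum_mul, mul_smul_comm,
          smul_mul_assoc, smul_sub, Finset.sum_sub_distrib]
    _ = (4 : 𝕜) • ∑ a, ∑ b, K a b •
          ((∑ c, (L * η) c a • γ c) * γ b + γ a * ∑ c, (L * η) c b • γ c) := by
        simp only [hX, commutator_bivector_gamma hγ hL, smul_mul_assoc, mul_smul_comm,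
          smul_comm (K _ _) (4 : 𝕜), ← Finset.smul_sum, ← smul_add]
    _ = _ := by
        simp only [smul_add, Finset.sum_add_distrib, ← bivector_mul, ← bivector_mul_transpose,
          hKL]
        rw [map_sub, sub_eq_add_neg, smul_add]

theorem spinorMap_mul_sub_mul [CharZero 𝕜] [DecidableEq ι]
    (hγ : ∀ a b, γ a * γ b + γ b * γ a = (2 * η a b) • (1 : A)) (hη : ηᵀ = η)
    (hηη : η * η = 1)
    {B : Matrix ι ι 𝕜} (hB : (B * η)ᵀ = -(B * η)) (C : Matrix ι ι 𝕜) :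
    spinorMap γ η (B * C - C * B)
      = spinorMap γ η B * spinorMap γ η C - spinorMap γ η C * spinorMap γ η B := by
  have hB' : B * η * η = B := by rw [mul_assoc, hηη, Matrix.mul_one]
  have hC' : C * η * η = C := by rw [mul_assoc, hηη, Matrix.mul_one]
  rw [spinorMap_apply, spinorMap_apply, spinorMap_apply, smul_mul_smul_comm, smul_mul_smul_comm,
    ← smul_sub, commutator_bivector_bivector hγ hη hB, smul_smul, hB', hC', ← mul_assoc,
    ← mul_assoc, ← sub_mul]
  congr 1
  norm_num

end Clifford

open Clifford

def minkowskiSign (m : Fin 4) : ℝ := if m = 0 then 1 else -1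

def minkowski : Matrix (Fin 4) (Fin 4) ℝ := diagonal minkowskiSign

theorem gmink_eq (m n : Fin 4) : gmink m n = if m = n then (minkowskiSign m : ℂ) else 0 := by
  unfold gmink minkowskiSign; split_ifs <;> simp

theorem minkowski_transpose : minkowskiᵀ = minkowski :=
  diagonal_transpose _

theorem minkowski_mul_self : minkowski * minkowski = 1 := by
  rw [minkowski, diagonal_mul_diagonal, ← diagonal_one]
  congr 1; ext m; unfold minkowskiSign; split_ifs <;> norm_num

theorem gam_anticomm (a b : Fin 4) :
    gam a * gam b + gam b * gam a = (2 * minkowski a b) • (1 : Matrix (Fin 4) (Fin 4) ℂ) := by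
  fin_cases a <;> fin_cases b <;> simp [gam, minkowski, minkowskiSign, cons_mul, vecMul_cons] <;>
    ext p q <;> fin_cases p <;> fin_cases q <;> norm_num

/-- Row `r`, column `m` holds `Γ^r_{im}`, so that `Σ_h Γ^r_{ih} Γ^h_{jm}` is a matrix product. -/
def connectionMatrix (i : Fin 4) :
    (Fin 4 → Fin 4 → Fin 4 → ℝ) →ₗ[ℝ] Matrix (Fin 4) (Fin 4) ℝ where
  toFun T := Matrix.of fun r m => T i m r
  map_add' _ _ := rfl
  map_smul' _ _ := rfl

theorem connectionMatrix_apply (i : Fin 4) (T : Fin 4 → Fin 4 → Fin 4 → ℝ) (r m : Fin 4) :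
    connectionMatrix i T r m = T i m r := rfl

theorem Acon_eq_spinorMap (T : Fin 4 → Fin 4 → Fin 4 → ℝ) (p i q : Fin 4) :
    Acon T p i q = spinorMap gam minkowski (connectionMatrix i T) p q := by
  rw [spinorMap_apply, minkowski]
  simp only [bivector_apply, mul_diagonal, connectionMatrix_apply]
  simp only [Acon, gmink_eq, mul_ite, mul_zero, ite_mul, zero_mul, Finset.sum_ite_irrel,
    Finset.sum_const_zero, Finset.sum_ite_eq, Finset.mem_univ, ↓reduceIte, Finset.mul_sum,
    Matrix.smul_apply, Matrix.sum_apply, mul_apply, Complex.real_smul, Complex.ofReal_mul,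
    Complex.ofReal_inv, Complex.ofReal_ofNat]
  rw [Finset.sum_comm]
  refine Finset.sum_congr rfl fun m _ => Finset.sum_congr rfl fun r _ =>
    Finset.sum_congr rfl fun α _ => ?_
  ring

theorem connectionMatrix_mul_minkowski_transpose {T : Fin 4 → Fin 4 → Fin 4 → ℝ} {i : Fin 4}
    (hT : ∀ m s, ∑ n, T i n s * minkowski m n + ∑ n, T i n m * minkowski n s = 0) :
    (connectionMatrix i T * minkowski)ᵀ = -(connectionMatrix i T * minkowski) := by
  ext s m
  have h := hT m s
  simp only [minkowski, diagonal_apply, mul_ite, mul_zero, Finset.sum_ite_eq, Finset.sum_ite_eq',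
    Finset.mem_univ, if_true] at h
  simp only [minkowski, transpose_apply, Matrix.neg_apply, mul_diagonal, connectionMatrix_apply]
  linarith

theorem fderiv_linearMap_comp_apply {𝕜 E F G : Type*} [NontriviallyNormedField 𝕜]
    [CompleteSpace 𝕜] [NormedAddCommGroup E] [NormedSpace 𝕜 E] [NormedAddCommGroup F]
    [NormedSpace 𝕜 F] [FiniteDimensional 𝕜 F] [NormedAddCommGroup G] [NormedSpace 𝕜 G]
    (L : F →ₗ[𝕜] G) {f : E → F} {x : E} (hf : DifferentiableAt 𝕜 f x) (v : E) :
    fderiv 𝕜 (fun y => L (f y)) x v = L (fderiv 𝕜 f x v) :=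
  DFunLike.congr_fun (L.toContinuousLinearMap.hasFDerivAt.comp x hf.hasFDerivAt).fderiv v

section Derivatives

variable {Γ : (Fin 4 → ℝ) → Fin 4 → Fin 4 → Fin 4 → ℝ} {x : Fin 4 → ℝ}

theorem pdR_eq_fderiv (hΓ : DifferentiableAt ℝ Γ x) (i j m r : Fin 4) :
    pdR i (fun y => Γ y j m r) x = fderiv ℝ Γ x (Pi.single i 1) j m r :=
  fderiv_linearMap_comp_apply
    (LinearMap.proj r ∘ₗ LinearMap.proj m ∘ₗ LinearMap.proj j) hΓ _

theorem pdC_Acon (hΓ : DifferentiableAt ℝ Γ x) (i p j q : Fin 4) :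
    pdC i (fun y => Acon (Γ y) p j q) x = Acon (fderiv ℝ Γ x (Pi.single i 1)) p j q := by
  simp only [pdC, Acon_eq_spinorMap]
  exact fderiv_linearMap_comp_apply
    (entryLinearMap ℝ ℂ p q ∘ₗ spinorMap gam minkowski ∘ₗ connectionMatrix j) hΓ _

theorem of_Riem (hΓ : DifferentiableAt ℝ Γ x) (i j : Fin 4) :
    Matrix.of (fun r m => Riem Γ x r m i j)
      = connectionMatrix j (fderiv ℝ Γ x (Pi.single i 1))
        - connectionMatrix i (fderiv ℝ Γ x (Pi.single j 1))
        + (connectionMatrix i (Γ x) * connectionMatrix j (Γ x)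
          - connectionMatrix j (Γ x) * connectionMatrix i (Γ x)) := by
  ext r m
  simp only [Riem, pdR_eq_fderiv hΓ, of_apply, Matrix.add_apply, Matrix.sub_apply, mul_apply,
    connectionMatrix_apply, Finset.sum_sub_distrib]

end Derivatives

/-- For a metric-compatible connection `Γ` on `ℝ⁴` (holonomic frame) and the spinor
connection `A` given by the quarter-trace formula, the spinor curvature
`R(spinor)^p_{qij} = ∂_i A^p_{jq} - ∂_j A^p_{iq} + Σ_h (A^p_{ih} A^h_{jq} - A^p_{jh} A^h_{iq})`
is related to the Riemann curvature by
`R(spinor)^p_{qij} = (1/4) Σ_{m,n,r,α} R^r_{mij} γ^α_{qn} g^{mn} γ^p_{αr}`. -/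
theorem spinor_curvature_eq_quarter_riemann
    (Γ : (Fin 4 → ℝ) → Fin 4 → Fin 4 → Fin 4 → ℝ)
    (hdiff : ∀ i m r : Fin 4, Differentiable ℝ fun x => Γ x i m r)
    (hmetric : ∀ (x : Fin 4 → ℝ) (i m s : Fin 4),
      ∑ n : Fin 4, Γ x i n s * (if m = n then (if m = 0 then (1:ℝ) else -1) else 0)
        + ∑ n : Fin 4, Γ x i n m * (if n = s then (if n = 0 then (1:ℝ) else -1) else 0) = 0) :
    ∀ (x : Fin 4 → ℝ) (p q i j : Fin 4),
      pdC i (fun y => Acon (Γ y) p j q) x - pdC j (fun y => Acon (Γ y) p i q) x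
        + ∑ h : Fin 4, (Acon (Γ x) p i h * Acon (Γ x) h j q
            - Acon (Γ x) p j h * Acon (Γ x) h i q) =
      (4 : ℂ)⁻¹ * ∑ m : Fin 4, ∑ n : Fin 4, ∑ r : Fin 4, ∑ α : Fin 4,
        (Riem Γ x r m i j : ℂ) * gam n α q * gmink m n * gam r p α := by
  intro x p q i j
  have hΓ : DifferentiableAt ℝ Γ x := differentiableAt_pi.2 fun k =>
    differentiableAt_pi.2 fun m => differentiableAt_pi.2 fun r => hdiff k m r x
  -- the right-hand side is the quarter formula with `R^r_{mij}` in the slot of `Γ^r_{im}`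
  change _ = Acon (fun _ m r => Riem Γ x r m i j) p i q
  rw [pdC_Acon hΓ, pdC_Acon hΓ]
  simp only [Acon_eq_spinorMap]
  rw [show connectionMatrix i (fun _ m r => Riem Γ x r m i j)
      = Matrix.of (fun r m => Riem Γ x r m i j) from rfl, of_Riem hΓ, map_add, map_sub,
    spinorMap_mul_sub_mul gam_anticomm minkowski_transpose minkowski_mul_self
      (connectionMatrix_mul_minkowski_transpose (hmetric x i))]
  simp only [Matrix.add_apply, Matrix.sub_apply, mul_apply, Finset.sum_sub_distrib]
end
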